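/- For triangle ABC with A = (−1/2, 0), B = (1/2, 0), angles α at A and β at B, the locus of intersection points (x, y) of pairs of equal cevians AA₁ = BB₁ with y ≠ 0 satisfies the cubic equation (x² + y²) sin(β+α)(y sin(β−α) − 2x sin α sin β) + (y² − x²) sin α sin β sin(β−α) + xy(sin²α cos²β + sin²β cos²α − 2 sin²α sin²β) + (1/2) x sin α sin β sin(β+α) + (1/4) y sin(β−α) sin(β+α) + (1/4) sin α sin β sin(β−α) = 0. -/

import Mathlib

/-!
If `A₁` lies on the line `BC` and `O` on the line `AA₁`, then
`|AA₁| · |(O - A) × (C - B)| = |AO| · |(B - A) × (C - A)|`: both sides compare the distances of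
`A` and of `O` from `BC`. Writing this at both vertices, equal cevians through `O` give
`|AO|² ((O - B) × (C - A))² = |BO|² ((O - A) × (C - B))²`, which for `C = (c₀, c₁)` and
`O = (x, y)` is `y` times a cubic in `x, y`. Finally `sin α, cos α, sin β, cos β` are
`c₁, c₀ + 1/2, c₁, 1/2 - c₀` divided by `|CA|, |CB|, |CA|, |CB|`, and the trigonometric cubic is
bihomogeneous of degree `(2, 2)` in `(sin α, cos α)` and `(sin β, cos β)`; so it is that
coordinate cubic up to a nonzero factor.
-/

open EuclideanGeometry Real

noncomputable section

/-- The Euclidean plane. -/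
abbrev Pt : Type := EuclideanSpace ℝ (Fin 2)

/-- The point of the Euclidean plane with the given coordinates. -/
def pt (x y : ℝ) : Pt := WithLp.toLp 2 ![x, y]

open scoped RealInnerProductSpace

lemma segment_subset_affineSpan_pair {𝕜 E : Type*} [Ring 𝕜] [PartialOrder 𝕜] [AddCommGroup E]
    [Module 𝕜 E] (p q : E) : segment 𝕜 p q ⊆ line[𝕜, p, q] :=
  (AffineSubspace.convex _).segment_subset (left_mem_affineSpan_pair 𝕜 p q)
    (right_mem_affineSpan_pair 𝕜 p q)

@[simp] lemma pt_apply_zero (x y : ℝ) : pt x y 0 = x := rfl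

@[simp] lemma pt_apply_one (x y : ℝ) : pt x y 1 = y := rfl

namespace Pt

/-- The planar cross product: `cross (B -ᵥ A) (C -ᵥ A)` is twice the signed area of `ABC`. -/
def cross (u v : Pt) : ℝ := u 0 * v 1 - u 1 * v 0

lemma vsub_apply (P Q : Pt) (i : Fin 2) : (P -ᵥ Q) i = P i - Q i := rfl

lemma inner_eq (u v : Pt) : ⟪u, v⟫ = u 0 * v 0 + u 1 * v 1 := by
  simp [PiLp.inner_apply, Fin.sum_univ_two]; ring

lemma dist_sq_eq (P Q : Pt) : dist P Q ^ 2 = (P 0 - Q 0) ^ 2 + (P 1 - Q 1) ^ 2 := by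
  simp [EuclideanSpace.dist_eq, Fin.sum_univ_two, Real.dist_eq, sq_abs, add_nonneg, sq_nonneg]

lemma cos_angle_mul_dist_mul_dist (P Q R : Pt) :
    cos (∠ P Q R) * (dist P Q * dist R Q)
      = (P 0 - Q 0) * (R 0 - Q 0) + (P 1 - Q 1) * (R 1 - Q 1) := by
  rw [dist_eq_norm_vsub, dist_eq_norm_vsub, EuclideanGeometry.angle,
    InnerProductGeometry.cos_angle_mul_norm_mul_norm, inner_eq]
  rfl

lemma sin_angle_mul_dist_mul_dist (P Q R : Pt) :
    sin (∠ P Q R) * (dist P Q * dist R Q) = |cross (P -ᵥ Q) (R -ᵥ Q)| := by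
  rw [dist_eq_norm_vsub, dist_eq_norm_vsub, EuclideanGeometry.angle,
    InnerProductGeometry.sin_angle_mul_norm_mul_norm, inner_eq, inner_eq, inner_eq, cross,
    ← sqrt_sq_eq_abs]
  congr 1
  ring

lemma dist_sq_mul_cross_sq_of_mem_line {A B C A₁ O : Pt} (hA₁ : A₁ ∈ line[ℝ, B, C])
    (hO : O ∈ line[ℝ, A, A₁]) :
    dist A A₁ ^ 2 * cross (O -ᵥ A) (C -ᵥ B) ^ 2
      = dist A O ^ 2 * cross (B -ᵥ A) (C -ᵥ A) ^ 2 := by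
  obtain ⟨t, rfl⟩ := mem_affineSpan_pair_iff_exists_lineMap_eq.mp hA₁
  obtain ⟨b, rfl⟩ := mem_affineSpan_pair_iff_exists_lineMap_eq.mp hO
  simp only [dist_sq_eq, cross, vsub_apply, AffineMap.lineMap_apply, vadd_eq_add,
    PiLp.add_apply, PiLp.smul_apply, smul_eq_mul]
  ring

lemma dist_sq_mul_cross_sq_eq_of_equal_cevians {A B C A₁ B₁ O : Pt}
    (hA₁ : A₁ ∈ line[ℝ, B, C]) (hB₁ : B₁ ∈ line[ℝ, A, C])
    (hOA : O ∈ line[ℝ, A, A₁]) (hOB : O ∈ line[ℝ, B, B₁]) (hlen : dist A A₁ = dist B B₁)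
    (hABC : cross (B -ᵥ A) (C -ᵥ A) ≠ 0) :
    dist A O ^ 2 * cross (O -ᵥ B) (C -ᵥ A) ^ 2
      = dist B O ^ 2 * cross (O -ᵥ A) (C -ᵥ B) ^ 2 := by
  have hA := dist_sq_mul_cross_sq_of_mem_line hA₁ hOA
  have hB := dist_sq_mul_cross_sq_of_mem_line hB₁ hOB
  have harea : cross (A -ᵥ B) (C -ᵥ B) ^ 2 = cross (B -ᵥ A) (C -ᵥ A) ^ 2 := by
    simp only [cross, vsub_apply]; ring
  rw [harea, ← hlen] at hB
  refine mul_left_cancel₀ (pow_ne_zero 2 hABC) ?_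
  linear_combination cross (O -ᵥ A) (C -ᵥ B) ^ 2 * hB - cross (O -ᵥ B) (C -ᵥ A) ^ 2 * hA

lemma sin_cos_angle_mul_dist_of_unit_base {A B C : Pt} (hA : A = pt (-(1 / 2)) 0)
    (hB : B = pt (1 / 2) 0) (hC : 0 < C 1) :
    sin (∠ B A C) * dist C A = C 1 ∧ cos (∠ B A C) * dist C A = C 0 + 1 / 2 ∧
      sin (∠ A B C) * dist C B = C 1 ∧ cos (∠ A B C) * dist C B = 1 / 2 - C 0 := by
  have hAB : dist B A = 1 := by
    rw [hA, hB, EuclideanSpace.dist_eq]; norm_num [Fin.sum_univ_two, Real.dist_eq]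
  have hsα := sin_angle_mul_dist_mul_dist B A C
  have hcα := cos_angle_mul_dist_mul_dist B A C
  have hsβ := sin_angle_mul_dist_mul_dist A B C
  have hcβ := cos_angle_mul_dist_mul_dist A B C
  rw [hAB, one_mul] at hsα hcα
  rw [dist_comm, hAB, one_mul] at hsβ hcβ
  rw [hsα, hcα, hsβ, hcβ]
  norm_num [cross, vsub_apply, hA, hB, abs_of_pos hC]

end Pt

/-- The cubic of the statement with `sin (β ± α)` expanded, as a polynomial in
`sα = sin α`, `cα = cos α`, `sβ = sin β`, `cβ = cos β`. -/
def equalCevianCubic (sα cα sβ cβ x y : ℝ) : ℝ :=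
  (x ^ 2 + y ^ 2) * (sβ * cα + cβ * sα) * (y * (sβ * cα - cβ * sα) - 2 * x * sα * sβ)
    + (y ^ 2 - x ^ 2) * sα * sβ * (sβ * cα - cβ * sα)
    + x * y * (sα ^ 2 * cβ ^ 2 + sβ ^ 2 * cα ^ 2 - 2 * sα ^ 2 * sβ ^ 2)
    + 1 / 2 * x * sα * sβ * (sβ * cα + cβ * sα)
    + 1 / 4 * y * (sβ * cα - cβ * sα) * (sβ * cα + cβ * sα)
    + 1 / 4 * sα * sβ * (sβ * cα - cβ * sα)

lemma equalCevianCubic_mul (sα cα sβ cβ x y r s : ℝ) :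
    equalCevianCubic (sα * r) (cα * r) (sβ * s) (cβ * s) x y
      = r ^ 2 * s ^ 2 * equalCevianCubic sα cα sβ cβ x y := by
  unfold equalCevianCubic; ring

lemma equalCevianCubic_coord_eq_zero {A B C A₁ B₁ O : Pt} (hA : A = pt (-(1 / 2)) 0)
    (hB : B = pt (1 / 2) 0) (hC : C 1 ≠ 0)
    (hA₁ : A₁ ∈ line[ℝ, B, C]) (hB₁ : B₁ ∈ line[ℝ, A, C])
    (hOA : O ∈ line[ℝ, A, A₁]) (hOB : O ∈ line[ℝ, B, B₁]) (hlen : dist A A₁ = dist B B₁)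
    (hO : O 1 ≠ 0) :
    equalCevianCubic (C 1) (C 0 + 1 / 2) (C 1) (1 / 2 - C 0) (O 0) (O 1) = 0 := by
  have hrel := Pt.dist_sq_mul_cross_sq_eq_of_equal_cevians hA₁ hB₁ hOA hOB hlen (by
    simpa [Pt.cross, Pt.vsub_apply, hA, hB] using hC)
  simp only [Pt.dist_sq_eq, Pt.cross, Pt.vsub_apply, hA, hB, pt_apply_zero,
    pt_apply_one] at hrel
  refine (mul_eq_zero.mp ?_).resolve_left hO
  unfold equalCevianCubic
  linear_combination C 1 ^ 2 * hrel

theorem equal_cevian_locus_cubic (A B C A₁ B₁ O : Pt) (α β x y : ℝ)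
    (hA : A = pt (-(1 / 2)) 0) (hB : B = pt (1 / 2) 0)
    (hCup : 0 < C 1)
    (hα : ∠ B A C = α) (hβ : ∠ A B C = β)
    (hA₁ : A₁ ∈ affineSpan ℝ ({B, C} : Set Pt))
    (hB₁ : B₁ ∈ affineSpan ℝ ({A, C} : Set Pt))
    (hlen : dist A A₁ = dist B B₁)
    (hO₁ : O ∈ segment ℝ A A₁) (hO₂ : O ∈ segment ℝ B B₁)
    (hx : x = O 0) (hy : y = O 1) (hy0 : y ≠ 0) :
    (x ^ 2 + y ^ 2) * sin (β + α) * (y * sin (β - α) - 2 * x * sin α * sin β)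
      + (y ^ 2 - x ^ 2) * sin α * sin β * sin (β - α)
      + x * y * (sin α ^ 2 * cos β ^ 2 + sin β ^ 2 * cos α ^ 2
          - 2 * sin α ^ 2 * sin β ^ 2)
      + 1 / 2 * x * sin α * sin β * sin (β + α)
      + 1 / 4 * y * sin (β - α) * sin (β + α)
      + 1 / 4 * sin α * sin β * sin (β - α) = 0 := by
  subst hx hy hα hβ
  obtain ⟨hsα, hcα, hsβ, hcβ⟩ := Pt.sin_cos_angle_mul_dist_of_unit_base hA hB hCup
  have hcoord := equalCevianCubic_coord_eq_zero hA hB hCup.ne' hA₁ hB₁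
    (segment_subset_affineSpan_pair A A₁ hO₁) (segment_subset_affineSpan_pair B B₁ hO₂) hlen hy0
  have hCA : dist C A ≠ 0 := fun h ↦ by rw [h, mul_zero] at hsα; linarith
  have hCB : dist C B ≠ 0 := fun h ↦ by rw [h, mul_zero] at hsβ; linarith
  have hscale := equalCevianCubic_mul (sin (∠ B A C)) (cos (∠ B A C)) (sin (∠ A B C))
    (cos (∠ A B C)) (O 0) (O 1) (dist C A) (dist C B)
  rw [hsα, hcα, hsβ, hcβ, hcoord, eq_comm] at hscale
  rw [sin_add, sin_sub]
  exact (mul_eq_zero.mp hscale).resolve_left (by positivity)
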